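/- Let n ≥ 2 and 1 ≤ i ≤ n−1 be integers, d = gcd(i,n), r = n/d. Let a₁ ≥ a₂ ≥ ⋯ ≥ a_d be integers and let μ ∈ ℤⁿ be the vector in which each a_k is repeated r consecutive times. Let 1 ≤ k ≤ d−1 be an index with a_k > a_{k+1}, and let ν_k ∈ ℚⁿ be obtained from μ by replacing the 2r entries of blocks k and k+1 by (a_k + a_{k+1})/2. Then: ν_k is an i-twisted Newton vector; P̃_{ν_k}(j) ≤ P̃_μ(j) for all 1 ≤ j ≤ n−1 and P̃_{ν_k}(n) = P̃_μ(n); P̃_μ(rk) − P̃_{ν_k}(rk) = r(a_k − a_{k+1})/2 ≥ 1; and 𝐢(ν_k, μ) + 𝐛₁(ν_k, μ) ≥ 1. (This is the intermediate claim in the proof of Proposition 4.9: Ess-gap_{[0,n]}(ν̃_k, μ̃) ≥ 1.) -/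

import Mathlib

/-!
The difference `P̃_μ − P̃_ν` is `(a_k − a_{k+1})/2` times the hat function
`j ↦ 2 min(j, r(k+1)) − min(j, rk) − min(j, r(k+2))`, which is nonnegative, vanishes at every
block boundary `rm` with `m ≠ k+1` and equals `r` there. As `d ∣ i`, the shifted partial sums of
the integral vector `μ` are integers at block boundaries, and the breakpoints of `ν` are block
boundaries other than `r(k+1)`, so `ν` is a twisted Newton vector. Since `d ≤ i < n` forces
`r ≥ 2`, the gap at `r(k+1)` is at least `1`, so the vertical segment there contains a lattice
point that lies either on the lower polygon or strictly between the two.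
-/

/-- Shifted partial sum `P̃_ν(j) = ν₁ + ⋯ + ν_j + j·i/n` (0-indexed entries). -/
def newtonPT (n i : ℕ) (ν : ℕ → ℚ) (j : ℕ) : ℚ :=
  (∑ k ∈ Finset.range j, ν k) + (j : ℚ) * (i : ℚ) / (n : ℚ)

/-- A rational number is an integer. -/
def IsIntQ (q : ℚ) : Prop := ∃ m : ℤ, (m : ℚ) = q

/-- `ν` is an `i`-twisted Newton vector (of length `n`): weakly decreasing, integral shifted
total sum, and integral shifted partial sum at every breakpoint. -/
def IsTwNewton (n i : ℕ) (ν : ℕ → ℚ) : Prop :=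
  (∀ k, k + 1 < n → ν (k + 1) ≤ ν k) ∧
  IsIntQ (newtonPT n i ν n) ∧
  ∀ j, 1 ≤ j → j ≤ n - 1 → ν (j - 1) ≠ ν j → IsIntQ (newtonPT n i ν j)

/-- `𝐢(ν,ν')`: the number of lattice points strictly between the two shifted Newton polygons. -/
noncomputable def nIT (n i : ℕ) (ν ν' : ℕ → ℚ) : ℕ :=
  Set.ncard {p : ℕ × ℤ | 1 ≤ p.1 ∧ p.1 ≤ n - 1 ∧
    newtonPT n i ν p.1 < (p.2 : ℚ) ∧ (p.2 : ℚ) < newtonPT n i ν' p.1}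

/-- `𝐛₁(ν,ν')`: lattice points on the lower shifted polygon not lying on the upper one. -/
noncomputable def nB1T (n i : ℕ) (ν ν' : ℕ → ℚ) : ℕ :=
  Set.ncard {j : ℕ | 1 ≤ j ∧ j ≤ n - 1 ∧ IsIntQ (newtonPT n i ν j) ∧
    newtonPT n i ν j < newtonPT n i ν' j}

/-- `𝐛₂(ν,ν')`: lattice points on the upper shifted polygon not lying on the lower one. -/
noncomputable def nB2T (n i : ℕ) (ν ν' : ℕ → ℚ) : ℕ :=
  Set.ncard {j : ℕ | 1 ≤ j ∧ j ≤ n - 1 ∧ IsIntQ (newtonPT n i ν' j) ∧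
    newtonPT n i ν j < newtonPT n i ν' j}

open Finset

lemma two_le_div_gcd {i n : ℕ} (hi₁ : 1 ≤ i) (hi₂ : i ≤ n - 1) : 2 ≤ n / Nat.gcd i n := by
  have hg : Nat.gcd i n ≤ i := Nat.le_of_dvd hi₁ (Nat.gcd_dvd_left i n)
  have hn : n / Nat.gcd i n * Nat.gcd i n = n := Nat.div_mul_cancel (Nat.gcd_dvd_right i n)
  by_contra! h
  interval_cases h' : n / Nat.gcd i n <;> omega

lemma newtonPT_sub_newtonPT (n i j : ℕ) (μ ν : ℕ → ℚ) :
    newtonPT n i μ j - newtonPT n i ν j = ∑ l ∈ range j, (μ l - ν l) := by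
  simp only [newtonPT, sum_sub_distrib]; ring

lemma isIntQ_newtonPT {n i j : ℕ} {μ : ℕ → ℚ} (c : ℕ → ℤ) (hμ : ∀ l < j, μ l = c l)
    (hdvd : n ∣ j * i) : IsIntQ (newtonPT n i μ j) := by
  refine ⟨∑ l ∈ range j, c l + (j * i / n : ℕ), ?_⟩
  have hsum : ∑ l ∈ range j, μ l = ∑ l ∈ range j, (c l : ℚ) :=
    sum_congr rfl fun l hl => hμ l (mem_range.mp hl)
  rw [newtonPT, hsum, Int.cast_add, Int.cast_sum, Int.cast_natCast, Nat.cast_div_charZero hdvd,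
    Nat.cast_mul]

lemma apply_succ_le_of_eq_comp_div {n r d : ℕ} {ν g : ℕ → ℚ}
    (hg : ∀ q, q + 1 < d → g (q + 1) ≤ g q) (hν : ∀ l < n, ν l = g (l / r)) (hn : n ≤ r * d)
    {l : ℕ} (hl : l + 1 < n) : ν (l + 1) ≤ ν l := by
  rw [hν l (by omega), hν (l + 1) hl, Nat.succ_div]
  split_ifs with hdvd
  · have hq : (l + 1) / r < d := Nat.div_lt_of_lt_mul (by omega)
    rw [Nat.succ_div, if_pos hdvd] at hq
    exact hg _ hq
  · simp

lemma dvd_of_apply_pred_ne_of_eq_comp_div {n r j : ℕ} {ν g : ℕ → ℚ}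
    (hν : ∀ l < n, ν l = g (l / r)) (hj₁ : 1 ≤ j) (hjn : j < n) (hne : ν (j - 1) ≠ ν j) :
    r ∣ j := by
  obtain ⟨l, rfl⟩ : ∃ l, j = l + 1 := ⟨j - 1, by omega⟩
  by_contra hdvd
  rw [Nat.add_sub_cancel, hν l (by omega), hν (l + 1) hjn, Nat.succ_div, if_neg hdvd,
    add_zero] at hne
  exact hne rfl

def blockHat (r k j : ℕ) : ℤ :=
  2 * (min j (r * (k + 1)) : ℕ) - (min j (r * k) : ℕ) - (min j (r * (k + 2)) : ℕ)

def blockSlope (k q : ℕ) : ℤ :=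
  if q = k then 1 else if q = k + 1 then -1 else 0

section blockHat

variable {r k : ℕ}

lemma blockHat_nonneg (j : ℕ) : 0 ≤ blockHat r k j := by
  have h₁ : r * (k + 1) = r * k + r := by ring
  have h₂ : r * (k + 2) = r * k + 2 * r := by ring
  unfold blockHat; omega

lemma blockHat_mul_of_ne {m : ℕ} (hm : m ≠ k + 1) : blockHat r k (r * m) = 0 := by
  have h₁ : r * (k + 1) = r * k + r := by ring
  have h₂ : r * (k + 2) = r * k + 2 * r := by ring
  unfold blockHat
  rcases Nat.lt_or_gt_of_ne hm with hm | hm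
  · have : r * m ≤ r * k := Nat.mul_le_mul_left r (by omega)
    omega
  · have : r * (k + 2) ≤ r * m := Nat.mul_le_mul_left r hm
    omega

lemma blockHat_mul_succ : blockHat r k (r * (k + 1)) = r := by
  have h₁ : r * (k + 1) = r * k + r := by ring
  have h₂ : r * (k + 2) = r * k + 2 * r := by ring
  unfold blockHat; omega

lemma blockHat_succ_sub (hr : 0 < r) (l : ℕ) :
    blockHat r k (l + 1) - blockHat r k l = blockSlope k (l / r) := by
  have h₀ : l < r * k ↔ l / r < k := by rw [Nat.div_lt_iff_lt_mul hr, mul_comm]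
  have h₁ : l < r * (k + 1) ↔ l / r < k + 1 := by rw [Nat.div_lt_iff_lt_mul hr, mul_comm]
  have h₂ : l < r * (k + 2) ↔ l / r < k + 2 := by rw [Nat.div_lt_iff_lt_mul hr, mul_comm]
  unfold blockHat blockSlope
  split_ifs <;> omega

end blockHat

def averagedBlocks (a : ℕ → ℤ) (k q : ℕ) : ℚ :=
  if q = k ∨ q = k + 1 then ((a k : ℚ) + (a (k + 1) : ℚ)) / 2 else ((a q : ℤ) : ℚ)

lemma sub_averagedBlocks (a : ℕ → ℤ) (k q : ℕ) :
    (a q : ℚ) - averagedBlocks a k q = ((a k : ℚ) - a (k + 1)) / 2 * blockSlope k q := by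
  unfold averagedBlocks blockSlope
  split_ifs <;> first | omega | (subst_vars; push_cast; ring)

lemma averagedBlocks_succ_le {a : ℕ → ℤ} {d k q : ℕ} (ha : ∀ l, l + 1 < d → a (l + 1) ≤ a l)
    (hk : k + 1 < d) (hq : q + 1 < d) :
    averagedBlocks a k (q + 1) ≤ averagedBlocks a k q := by
  have ha' : ∀ l, l + 1 < d → (a (l + 1) : ℚ) ≤ a l := fun l hl => by exact_mod_cast ha l hl
  have hak := ha' k hk
  unfold averagedBlocks
  split_ifs with h₁ h₂ h₂
  · rfl
  · obtain rfl : q + 1 = k := by omega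
    linarith [ha' q hq]
  · obtain rfl : q = k + 1 := by omega
    linarith [ha' (k + 1) hq]
  · exact ha' q hq

section averagedBlocks

variable {n i r d k : ℕ} {a : ℕ → ℤ} {μ ν : ℕ → ℚ}

lemma newtonPT_sub_newtonPT_averagedBlocks (hr : 0 < r) (hμ : ∀ l < n, μ l = a (l / r))
    (hν : ∀ l < n, ν l = averagedBlocks a k (l / r)) {j : ℕ} (hj : j ≤ n) :
    newtonPT n i μ j - newtonPT n i ν j = ((a k : ℚ) - a (k + 1)) / 2 * blockHat r k j := by
  rw [newtonPT_sub_newtonPT]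
  induction j with
  | zero => simp [blockHat]
  | succ j ih =>
    rw [sum_range_succ, ih (by omega), hμ j (by omega), hν j (by omega), sub_averagedBlocks,
      ← blockHat_succ_sub hr]
    push_cast; ring

lemma newtonPT_averagedBlocks_le (hr : 0 < r) (hμ : ∀ l < n, μ l = a (l / r))
    (hν : ∀ l < n, ν l = averagedBlocks a k (l / r)) (hak : a (k + 1) ≤ a k) {j : ℕ}
    (hj : j ≤ n) : newtonPT n i ν j ≤ newtonPT n i μ j := by
  have hδ : (0 : ℚ) ≤ ((a k : ℚ) - a (k + 1)) / 2 := by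
    have : (a (k + 1) : ℚ) ≤ a k := by exact_mod_cast hak
    linarith
  have hhat : (0 : ℚ) ≤ blockHat r k j := by exact_mod_cast blockHat_nonneg j
  linarith [newtonPT_sub_newtonPT_averagedBlocks (i := i) hr hμ hν hj, mul_nonneg hδ hhat]

lemma newtonPT_averagedBlocks_mul (hr : 0 < r) (hμ : ∀ l < n, μ l = a (l / r))
    (hν : ∀ l < n, ν l = averagedBlocks a k (l / r)) {m : ℕ} (hmk : m ≠ k + 1)
    (hm : r * m ≤ n) : newtonPT n i ν (r * m) = newtonPT n i μ (r * m) := by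
  have heq := newtonPT_sub_newtonPT_averagedBlocks (i := i) hr hμ hν hm
  rw [blockHat_mul_of_ne hmk, Int.cast_zero, mul_zero, sub_eq_zero] at heq
  exact heq.symm

lemma isIntQ_newtonPT_averagedBlocks_mul (hr : 0 < r) (hμ : ∀ l < n, μ l = a (l / r))
    (hν : ∀ l < n, ν l = averagedBlocks a k (l / r)) (hn : n = r * d) (hdi : d ∣ i) {m : ℕ}
    (hm : m ≤ d) (hmk : m ≠ k + 1) : IsIntQ (newtonPT n i ν (r * m)) := by
  have hrm : r * m ≤ n := hn ▸ Nat.mul_le_mul_left r hm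
  rw [newtonPT_averagedBlocks_mul hr hμ hν hmk hrm]
  refine isIntQ_newtonPT (fun l => a (l / r)) (fun l hl => hμ l (by omega)) ?_
  rw [hn, mul_assoc]
  exact Nat.mul_dvd_mul_left r (hdi.mul_left m)

lemma isIntQ_newtonPT_averagedBlocks_of_ne (hr : 0 < r) (hμ : ∀ l < n, μ l = a (l / r))
    (hν : ∀ l < n, ν l = averagedBlocks a k (l / r)) (hn : n = r * d) (hdi : d ∣ i) {j : ℕ}
    (hj₁ : 1 ≤ j) (hjn : j < n) (hne : ν (j - 1) ≠ ν j) : IsIntQ (newtonPT n i ν j) := by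
  obtain ⟨m, rfl⟩ := dvd_of_apply_pred_ne_of_eq_comp_div hν hj₁ hjn hne
  refine isIntQ_newtonPT_averagedBlocks_mul hr hμ hν hn hdi
    (Nat.le_of_lt (Nat.lt_of_mul_lt_mul_left (hn ▸ hjn))) ?_
  rintro rfl
  have hsucc : r * (k + 1) = k * r + r := by ring
  have hlast : (r * (k + 1) - 1) / r = k :=
    Nat.div_eq_of_lt_le (by omega) (by rw [hsucc, Nat.succ_mul]; omega)
  rw [hν _ (by omega), hν _ hjn, hlast, Nat.mul_div_cancel_left _ hr] at hne
  simp [averagedBlocks] at hne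

lemma isTwNewton_averagedBlocks (hr : 0 < r) (ha : ∀ l, l + 1 < d → a (l + 1) ≤ a l)
    (hk : k + 1 < d) (hμ : ∀ l < n, μ l = a (l / r))
    (hν : ∀ l < n, ν l = averagedBlocks a k (l / r)) (hn : n = r * d) (hdi : d ∣ i) :
    IsTwNewton n i ν := by
  have hmono := fun q (hq : q + 1 < d) => averagedBlocks_succ_le ha hk hq
  have htop := isIntQ_newtonPT_averagedBlocks_mul hr hμ hν hn hdi le_rfl (by omega)
  rw [← hn] at htop
  exact ⟨fun l hl => apply_succ_le_of_eq_comp_div hmono hν hn.le hl, htop,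
    fun j hj₁ hjn hne => isIntQ_newtonPT_averagedBlocks_of_ne hr hμ hν hn hdi hj₁ (by omega) hne⟩

end averagedBlocks

section latticeCount

variable {n i j : ℕ} {μ ν : ℕ → ℚ}

lemma nB1T_pos (hj₁ : 1 ≤ j) (hjn : j ≤ n - 1) (hint : IsIntQ (newtonPT n i ν j))
    (hlt : newtonPT n i ν j < newtonPT n i μ j) : 0 < nB1T n i ν μ := by
  have hfin : {j : ℕ | 1 ≤ j ∧ j ≤ n - 1 ∧ IsIntQ (newtonPT n i ν j) ∧
      newtonPT n i ν j < newtonPT n i μ j}.Finite :=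
    (Set.finite_Icc 1 (n - 1)).subset fun x hx => ⟨hx.1, hx.2.1⟩
  exact (Set.ncard_pos hfin).mpr ⟨j, hj₁, hjn, hint, hlt⟩

lemma nIT_pos (hj₁ : 1 ≤ j) (hjn : j ≤ n - 1) {m : ℤ} (hlo : newtonPT n i ν j < m)
    (hhi : m < newtonPT n i μ j) : 0 < nIT n i ν μ := by
  have hfin : {p : ℕ × ℤ | 1 ≤ p.1 ∧ p.1 ≤ n - 1 ∧
      newtonPT n i ν p.1 < (p.2 : ℚ) ∧ (p.2 : ℚ) < newtonPT n i μ p.1}.Finite := by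
    refine ((Set.finite_Icc 1 (n - 1)).biUnion fun j _ =>
      (Set.finite_Icc ⌈newtonPT n i ν j⌉ ⌊newtonPT n i μ j⌋).image (j, ·)).subset ?_
    rintro ⟨j, m⟩ ⟨h₁, h₂, h₃, h₄⟩
    exact Set.mem_biUnion (⟨h₁, h₂⟩ : j ∈ Set.Icc 1 (n - 1))
      ⟨m, ⟨Int.ceil_le.mpr h₃.le, Int.le_floor.mpr h₄.le⟩, rfl⟩
  exact (Set.ncard_pos hfin).mpr ⟨(j, m), hj₁, hjn, hlo, hhi⟩

lemma one_le_nIT_add_nB1T (hj₁ : 1 ≤ j) (hjn : j ≤ n - 1)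
    (hgap : newtonPT n i ν j + 1 ≤ newtonPT n i μ j) : 1 ≤ nIT n i ν μ + nB1T n i ν μ := by
  by_cases hint : IsIntQ (newtonPT n i ν j)
  · have := nB1T_pos hj₁ hjn hint (by linarith)
    omega
  · set x := newtonPT n i ν j
    have hlo : x < ⌊x⌋ + 1 := Int.lt_floor_add_one x
    have hfl : (⌊x⌋ : ℚ) < x := (Int.floor_le x).lt_of_ne fun h => hint ⟨⌊x⌋, h⟩
    have := nIT_pos (μ := μ) hj₁ hjn (m := ⌊x⌋ + 1) (by push_cast; exact hlo)
      (by push_cast; linarith)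
    omega

end latticeCount

theorem essGap_of_averaged_blocks_general (n i : ℕ) (hi1 : 1 ≤ i)
    (hi2 : i ≤ n - 1) (d r : ℕ) (hd : d = Nat.gcd i n) (hr : r = n / d)
    (a : ℕ → ℤ) (ha : ∀ l, l + 1 < d → a (l + 1) ≤ a l)
    (μ : ℕ → ℚ) (hμ : ∀ l, l < n → μ l = ((a (l / r) : ℤ) : ℚ))
    (k : ℕ) (hk : k + 1 < d) (hak : a (k + 1) < a k)
    (ν : ℕ → ℚ)
    (hν : ∀ l, l < n → ν l =
      if l / r = k ∨ l / r = k + 1 then ((a k : ℚ) + (a (k + 1) : ℚ)) / 2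
      else ((a (l / r) : ℤ) : ℚ)) :
    IsTwNewton n i ν ∧
    (∀ j, 1 ≤ j → j ≤ n - 1 → newtonPT n i ν j ≤ newtonPT n i μ j) ∧
    newtonPT n i ν n = newtonPT n i μ n ∧
    newtonPT n i μ (r * (k + 1)) - newtonPT n i ν (r * (k + 1)) =
      (r : ℚ) * ((a k : ℚ) - (a (k + 1) : ℚ)) / 2 ∧
    1 ≤ (r : ℚ) * ((a k : ℚ) - (a (k + 1) : ℚ)) / 2 ∧
    1 ≤ nIT n i ν μ + nB1T n i ν μ := by
  have hdi : d ∣ i := hd ▸ Nat.gcd_dvd_left i n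
  have hn : n = r * d := hr ▸ (Nat.div_mul_cancel (hd ▸ Nat.gcd_dvd_right i n)).symm
  have hr₂ : 2 ≤ r := hr ▸ hd ▸ two_le_div_gcd hi1 hi2
  have hν' : ∀ l < n, ν l = averagedBlocks a k (l / r) := hν
  have hpeak : r * (k + 1) + r ≤ n := by
    rw [hn, ← Nat.mul_succ]; exact Nat.mul_le_mul_left r hk
  have hgap : newtonPT n i μ (r * (k + 1)) - newtonPT n i ν (r * (k + 1)) =
      (r : ℚ) * ((a k : ℚ) - (a (k + 1) : ℚ)) / 2 := by
    rw [newtonPT_sub_newtonPT_averagedBlocks (by omega) hμ hν' (by omega), blockHat_mul_succ]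
    push_cast; ring
  have hone : 1 ≤ (r : ℚ) * ((a k : ℚ) - (a (k + 1) : ℚ)) / 2 := by
    have hδ : (1 : ℚ) ≤ a k - a (k + 1) := by
      exact_mod_cast (by omega : (1 : ℤ) ≤ a k - a (k + 1))
    have hr₂' : (2 : ℚ) ≤ r := by exact_mod_cast hr₂
    nlinarith
  have htop : newtonPT n i ν n = newtonPT n i μ n := by
    have := newtonPT_averagedBlocks_mul (i := i) (m := d) (by omega) hμ hν' (by omega) hn.ge
    rwa [← hn] at this
  exact ⟨isTwNewton_averagedBlocks (by omega) ha hk hμ hν' hn hdi,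
    fun j _ hj => newtonPT_averagedBlocks_le (by omega) hμ hν' hak.le (by omega), htop, hgap, hone,
    one_le_nIT_add_nB1T (j := r * (k + 1)) (by nlinarith) (by omega) (by linarith)⟩

/-- intermediate claim in the proof of Proposition 4.9: with `μ` the
`r`-block vector of the weakly decreasing integers `a₀ ≥ ⋯ ≥ a_{d−1}`, if two adjacent
block values satisfy `a_k > a_{k+1}` (0-indexed) and `ν` is obtained from `μ` by replacing
the `2r` entries of blocks `k` and `k+1` by `(a_k + a_{k+1})/2`, then `ν` is an `i`-twisted
Newton vector, `ν ≤ μ`, the gap at `j = r(k+1)` is `r(a_k − a_{k+1})/2 ≥ 1`, and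
`𝐢(ν,μ) + 𝐛₁(ν,μ) ≥ 1`. -/
theorem essGap_of_averaged_blocks (n i : ℕ) (hn : 2 ≤ n) (hi1 : 1 ≤ i)
    (hi2 : i ≤ n - 1) (d r : ℕ) (hd : d = Nat.gcd i n) (hr : r = n / d)
    (a : ℕ → ℤ) (ha : ∀ l, l + 1 < d → a (l + 1) ≤ a l)
    (μ : ℕ → ℚ) (hμ : ∀ l, l < n → μ l = ((a (l / r) : ℤ) : ℚ))
    (k : ℕ) (hk : k + 1 < d) (hak : a (k + 1) < a k)
    (ν : ℕ → ℚ)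
    (hν : ∀ l, l < n → ν l =
      if l / r = k ∨ l / r = k + 1 then ((a k : ℚ) + (a (k + 1) : ℚ)) / 2
      else ((a (l / r) : ℤ) : ℚ)) :
    IsTwNewton n i ν ∧
    (∀ j, 1 ≤ j → j ≤ n - 1 → newtonPT n i ν j ≤ newtonPT n i μ j) ∧
    newtonPT n i ν n = newtonPT n i μ n ∧
    newtonPT n i μ (r * (k + 1)) - newtonPT n i ν (r * (k + 1)) =
      (r : ℚ) * ((a k : ℚ) - (a (k + 1) : ℚ)) / 2 ∧
    1 ≤ (r : ℚ) * ((a k : ℚ) - (a (k + 1) : ℚ)) / 2 ∧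
    1 ≤ nIT n i ν μ + nB1T n i ν μ :=
  essGap_of_averaged_blocks_general n i hi1 hi2 d r hd hr a ha μ hμ k hk hak ν hν
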